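/- (Daffodil-type lemma) Let C(z) = Σ_{n≥0} c(n)·zⁿ be a power series with nonnegative coefficients converging on |z| ≤ ρ (ρ > 0), and suppose there exist indices i < j < k with c(i), c(j), c(k) > 0 and gcd(j−i, k−i) = 1. Then for every θ with 0 < θ < 2π, |C(ρ·e^{iθ})| < C(ρ). -/

import Mathlib

open Complex Real

/-!
Write the terms as `aₙ • wⁿ` with `aₙ = c(n) ρⁿ ≥ 0` and `w = e^{iθ} ≠ 1`. In a strictly convex
space the triangle inequality for a series is strict as soon as two of its terms do not lie on a
common ray, i.e. here as soon as `wᵖ ≠ w^q` for two indices with positive coefficients. If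
instead `wⁱ = wʲ = wᵏ`, then `w^{j-i} = w^{k-i} = 1`, and coprimality forces `w = 1`.
-/

theorem SameRay.eq_of_pos_smul_of_norm_eq_one {E : Type*} [NormedAddCommGroup E]
    [NormedSpace ℝ E] {a b : ℝ} {u v : E} (ha : 0 < a) (hb : 0 < b) (hu : ‖u‖ = 1) (hv : ‖v‖ = 1)
    (h : SameRay ℝ (a • u) (b • v)) : u = v := by
  rw [sameRay_iff_norm_smul_eq, norm_smul, norm_smul, hu, hv, Real.norm_of_nonneg ha.le,
    Real.norm_of_nonneg hb.le, smul_smul, smul_smul, mul_one, mul_one, mul_comm] at h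
  exact (smul_right_injective E (mul_pos hb ha).ne' h).symm

theorem norm_tsum_lt_tsum_norm_of_not_sameRay {ι E : Type*} [NormedAddCommGroup E]
    [NormedSpace ℝ E] [StrictConvexSpace ℝ E] [CompleteSpace E] {f : ι → E}
    (hf : Summable fun n => ‖f n‖) {p q : ι} (hpq : p ≠ q) (h : ¬SameRay ℝ (f p) (f q)) :
    ‖∑' n, f n‖ < ∑' n, ‖f n‖ := by
  classical
  rw [← hf.of_norm.sum_add_tsum_compl (s := {p, q}), ← hf.sum_add_tsum_compl (s := {p, q}),
    Finset.sum_pair hpq, Finset.sum_pair hpq]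
  calc ‖f p + f q + ∑' n : ↥((({p, q} : Finset ι) : Set ι)ᶜ), f n‖
      ≤ ‖f p + f q‖ + ‖∑' n : ↥((({p, q} : Finset ι) : Set ι)ᶜ), f n‖ := norm_add_le _ _
    _ < ‖f p‖ + ‖f q‖ + ∑' n : ↥((({p, q} : Finset ι) : Set ι)ᶜ), ‖f n‖ :=
      add_lt_add_of_lt_of_le (norm_add_lt_of_not_sameRay h)
        (norm_tsum_le_tsum_norm (hf.subtype _))

theorem norm_tsum_smul_lt_tsum {ι E : Type*} [NormedAddCommGroup E]
    [NormedSpace ℝ E] [StrictConvexSpace ℝ E] [CompleteSpace E] {a : ι → ℝ} {u : ι → E}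
    (ha : ∀ n, 0 ≤ a n) (hsum : Summable a) (hu : ∀ n, ‖u n‖ = 1) {p q : ι}
    (hp : 0 < a p) (hq : 0 < a q) (hpq : u p ≠ u q) :
    ‖∑' n, a n • u n‖ < ∑' n, a n := by
  have hnorm : ∀ n, ‖a n • u n‖ = a n := fun n => by
    rw [norm_smul, hu, mul_one, Real.norm_of_nonneg (ha n)]
  have hsum' : Summable fun n => ‖a n • u n‖ := by simpa only [hnorm] using hsum
  calc ‖∑' n, a n • u n‖ < ∑' n, ‖a n • u n‖ :=
        norm_tsum_lt_tsum_norm_of_not_sameRay hsum' (ne_of_apply_ne u hpq)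
          fun h => hpq (h.eq_of_pos_smul_of_norm_eq_one hp hq (hu p) (hu q))
    _ = ∑' n, a n := tsum_congr hnorm

theorem eq_one_of_pow_eq_pow_of_coprime {G₀ : Type*} [GroupWithZero G₀] {x : G₀} (hx : x ≠ 0)
    {i j k : ℕ} (hj : x ^ i = x ^ j) (hk : x ^ i = x ^ k) (hcop : Nat.Coprime (j - i) (k - i)) :
    x = 1 := by
  have pow_sub_eq_one : ∀ {m}, x ^ i = x ^ m → x ^ (m - i) = 1 := fun {m} h => by
    rcases le_total i m with him | hmi
    · rw [pow_sub₀ x hx him, ← h, mul_inv_cancel₀ (pow_ne_zero i hx)]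
    · rw [Nat.sub_eq_zero_of_le hmi, pow_zero]
  exact (pow_eq_one_iff_of_coprime hcop).mp ⟨pow_sub_eq_one hj, pow_sub_eq_one hk⟩

theorem Complex.exp_ofReal_mul_I_ne_one {θ : ℝ} (h0 : 0 < θ) (h2π : θ < 2 * π) :
    exp (θ * I) ≠ 1 := by
  rw [Ne, exp_eq_one_iff]
  rintro ⟨n, hn⟩
  have hθ : θ = n * (2 * π) := by simpa using congrArg im hn
  have h1 : (0 : ℝ) < n := by nlinarith [pi_pos]
  have h2 : (n : ℝ) < 1 := by nlinarith [pi_pos]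
  norm_cast at h1 h2
  omega

theorem stmt5_general (c : ℕ → ℝ) (hc : ∀ n, 0 ≤ c n) (ρ : ℝ) (hρ : 0 < ρ)
    (hconv : Summable fun n => c n * ρ ^ n)
    (i j k : ℕ)
    (hci : 0 < c i) (hcj : 0 < c j) (hck : 0 < c k)
    (hgcd : Nat.gcd (j - i) (k - i) = 1) :
    ∀ θ : ℝ, 0 < θ → θ < 2 * Real.pi →
      ‖∑' n, (c n : ℂ) * (ρ * Complex.exp (θ * Complex.I)) ^ n‖ <
        ∑' n, c n * ρ ^ n := by
  intro θ hθ0 hθ2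
  set w := exp (θ * I)
  obtain ⟨q, hcq, hwq⟩ : ∃ q, 0 < c q ∧ w ^ i ≠ w ^ q := by
    by_contra! h
    exact exp_ofReal_mul_I_ne_one hθ0 hθ2 <|
      eq_one_of_pow_eq_pow_of_coprime (exp_ne_zero _) (h j hcj) (h k hck) hgcd
  have hterm : ∀ n, (c n : ℂ) * (ρ * w) ^ n = (c n * ρ ^ n) • w ^ n := fun n => by
    rw [real_smul]; push_cast; ring
  simp only [hterm]
  exact norm_tsum_smul_lt_tsum (fun n => mul_nonneg (hc n) (pow_nonneg hρ.le n)) hconv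
    (fun n => by rw [norm_pow, norm_exp_ofReal_mul_I, one_pow])
    (mul_pos hci (pow_pos hρ i)) (mul_pos hcq (pow_pos hρ q)) hwq

/-- Daffodil-type lemma: for an aperiodic power series with nonnegative coefficients,
the modulus on the circle `|z| = ρ` away from the positive real axis is strictly
smaller than the value at `ρ`. -/
theorem stmt5 (c : ℕ → ℝ) (hc : ∀ n, 0 ≤ c n) (ρ : ℝ) (hρ : 0 < ρ)
    (hconv : Summable fun n => c n * ρ ^ n)
    (i j k : ℕ) (hij : i < j) (hjk : j < k)
    (hci : 0 < c i) (hcj : 0 < c j) (hck : 0 < c k)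
    (hgcd : Nat.gcd (j - i) (k - i) = 1) :
    ∀ θ : ℝ, 0 < θ → θ < 2 * Real.pi →
      ‖∑' n, (c n : ℂ) * (ρ * Complex.exp (θ * Complex.I)) ^ n‖ <
        ∑' n, c n * ρ ^ n :=
  stmt5_general c hc ρ hρ hconv i j k hci hcj hck hgcd
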